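/- arXiv:1406.7178 — 9 statements merged into one kernel-verified Lean document; each statement's English description precedes it below -/
import Mathlib

section
/- Let S = {x ∈ ℝ^N : ‖x‖₀ ≤ s} be the set of s-sparse vectors and let x̄ ∈ S. Then the Bouligand tangent cone of S at x̄ equals {d ∈ ℝ^N : ‖d‖₀ ≤ s and ‖x̄ + μd‖₀ ≤ s for all μ ∈ ℝ}. -/
open Filter Topology

noncomputable section

/-- number of nonzero entries of `x` (the ℓ₀ "norm"). -/
def nrm0 {N : ℕ} (x : Fin N → ℝ) : ℕ :=
  (Finset.univ.filter (fun i => x i ≠ 0)).card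

/-- support of `x` as a finset. -/
def supp {N : ℕ} (x : Fin N → ℝ) : Finset (Fin N) :=
  Finset.univ.filter (fun i => x i ≠ 0)

/-- Bouligand tangent cone of `S` at `xb`. -/
def BTan {N : ℕ} (S : Set (Fin N → ℝ)) (xb : Fin N → ℝ) : Set (Fin N → ℝ) :=
  {d | ∃ (x : ℕ → Fin N → ℝ) (lam : ℕ → ℝ),
    (∀ k, x k ∈ S) ∧ (∀ k, 0 ≤ lam k) ∧
    Tendsto x atTop (nhds xb) ∧
    Tendsto (fun k => lam k • (x k - xb)) atTop (nhds d)}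

/-- Clarke tangent cone of `S` at `xb`. -/
def CTan {N : ℕ} (S : Set (Fin N → ℝ)) (xb : Fin N → ℝ) : Set (Fin N → ℝ) :=
  {d | ∀ (x : ℕ → Fin N → ℝ) (lam : ℕ → ℝ),
    (∀ k, x k ∈ S) → (∀ k, 0 < lam k) →
    Tendsto x atTop (nhds xb) → Tendsto lam atTop (nhds (0 : ℝ)) →
    ∃ y : ℕ → Fin N → ℝ, Tendsto y atTop (nhds d) ∧ ∀ k, x k + lam k • y k ∈ S}

/-- set-valued Euclidean projection onto `Ω`. -/
def Proj {N : ℕ} (Ω : Set (Fin N → ℝ)) (x : Fin N → ℝ) : Set (Fin N → ℝ) :=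
  {y | y ∈ Ω ∧ ∀ z ∈ Ω, ∑ i, (x i - y i) ^ 2 ≤ ∑ i, (x i - z i) ^ 2}

/-- The Bouligand tangent cone of the s-sparse set equals the set of s-sparse
directions `d` such that `xb + μ d` is s-sparse for every `μ`. -/
theorem stmt0 {N s : ℕ} (hs : s < N) (xb : Fin N → ℝ)
    (hxb : nrm0 xb ≤ s) :
    BTan {x : Fin N → ℝ | nrm0 x ≤ s} xb
      = {d : Fin N → ℝ | nrm0 d ≤ s ∧ ∀ μ : ℝ, nrm0 (xb + μ • d) ≤ s} := by
  ext d
  simp only [BTan, Set.mem_setOf_eq]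
  constructor
  · rintro ⟨x, lam, hxS, hlam, hx, hld⟩
    have key : (supp xb ∪ supp d).card ≤ s := by
      have hev : ∀ᶠ k in atTop, ∀ i ∈ supp xb ∪ supp d, x k i ≠ 0 := by
        rw [Filter.eventually_all_finset]
        intro i hi
        by_cases hxbi : xb i = 0
        · have hdi : d i ≠ 0 := by
            rcases Finset.mem_union.mp hi with h | h
            · exact absurd hxbi (by simpa [supp] using h)
            · simpa [supp] using h
          have h1 : Tendsto (fun k => lam k * (x k i - xb i)) atTop (𝓝 (d i)) := by
            have := (tendsto_pi_nhds.mp hld) i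
            simpa using this
          filter_upwards [h1.eventually_ne hdi] with k hk hx0
          exact hk (by simp [hx0, hxbi])
        · have : Tendsto (fun k => x k i) atTop (𝓝 (xb i)) := (tendsto_pi_nhds.mp hx) i
          exact this.eventually_ne hxbi
      obtain ⟨k, hk⟩ := hev.exists
      calc (supp xb ∪ supp d).card ≤ (supp (x k)).card :=
            Finset.card_le_card fun i hi => by
              simp only [supp, Finset.mem_filter, Finset.mem_univ, true_and]
              exact hk i hi
        _ ≤ s := hxS k
    constructor
    · refine le_trans (Finset.card_le_card ?_) key
      exact Finset.subset_union_right
    · intro μ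
      refine le_trans (Finset.card_le_card ?_) key
      intro i hi
      simp only [supp, Finset.mem_filter, Finset.mem_univ, true_and, Finset.mem_union,
        Pi.add_apply, Pi.smul_apply, smul_eq_mul] at hi ⊢
      by_contra h
      push_neg at h
      exact hi (by simp [h.1, h.2])
  · rintro ⟨hd, hμ⟩
    have key : (supp xb ∪ supp d).card ≤ s := by
      obtain ⟨μ, hμbad⟩ := Infinite.exists_notMem_finset
        ((Finset.univ.image fun i => -(xb i) / d i) : Finset ℝ)
      refine le_trans (Finset.card_le_card ?_) (hμ μ)
      intro i hi
      simp only [supp, Finset.mem_filter, Finset.mem_univ, true_and, Finset.mem_union] at hi ⊢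
      simp only [Pi.add_apply, Pi.smul_apply, smul_eq_mul]
      by_cases hdi : d i = 0
      · have hxbi : xb i ≠ 0 := by tauto
        simpa [hdi] using hxbi
      · intro hc
        apply hμbad
        simp only [Finset.mem_image, Finset.mem_univ, true_and]
        exact ⟨i, by field_simp; linarith⟩
    refine ⟨fun k => xb + (1 / (k + 1 : ℝ)) • d, fun k => (k + 1 : ℝ), ?_, ?_, ?_, ?_⟩
    · intro k; exact hμ _
    · intro k; positivity
    · have h0 : Tendsto (fun k : ℕ => (1 / (k + 1 : ℝ))) atTop (𝓝 0) :=
        tendsto_one_div_add_atTop_nhds_zero_nat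
      have := (tendsto_const_nhds (x := xb)).add (h0.smul_const d)
      simpa using this
    · have : (fun k : ℕ => ((k : ℝ) + 1) • ((xb + (1 / (k + 1 : ℝ)) • d) - xb)) = fun _ => d := by
        funext k
        have hk : ((k : ℝ) + 1) ≠ 0 := by positivity
        simp [smul_smul, one_div, mul_inv_cancel₀ hk]
      rw [this]
      exact tendsto_const_nhds
end
end

section
/- Let S = {x ∈ ℝ^N : ‖x‖₀ ≤ s} and x̄ ∈ S with support Γ = supp(x̄). The Bouligand tangent cone of S at x̄ equals the union over all index sets Υ with Γ ⊆ Υ and |Υ| ≤ s of the coordinate subspaces span{e_i : i ∈ Υ}. -/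
open Filter Topology

noncomputable section

lemma mem_span_single_iff {N : ℕ} (Y : Finset (Fin N)) (d : Fin N → ℝ) :
    d ∈ Submodule.span ℝ ((fun i => (Pi.single i 1 : Fin N → ℝ)) '' (Y : Set (Fin N))) ↔
      ∀ i ∉ Y, d i = 0 := by
  constructor
  · intro h i hi
    have hle : Submodule.span ℝ ((fun i => (Pi.single i 1 : Fin N → ℝ)) '' (Y : Set (Fin N)))
        ≤ LinearMap.ker (LinearMap.proj i : (Fin N → ℝ) →ₗ[ℝ] ℝ) := by
      rw [Submodule.span_le]
      rintro _ ⟨j, hj, rfl⟩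
      have hij : i ≠ j := by rintro rfl; exact hi hj
      simp [LinearMap.mem_ker, Pi.single_apply, hij]
    exact hle h
  · intro h
    have hd : d = ∑ i ∈ Y, d i • (Pi.single i 1 : Fin N → ℝ) := by
      funext j
      by_cases hj : j ∈ Y
      · rw [Finset.sum_apply]
        simp [Pi.single_apply, hj]
      · rw [Finset.sum_apply, Finset.sum_eq_zero, h j hj]
        intro i hi
        have hij : j ≠ i := by rintro rfl; exact hj hi
        simp [Pi.single_apply, hij]
    rw [hd]
    exact Submodule.sum_mem _ fun i hi =>
      Submodule.smul_mem _ _ (Submodule.subset_span ⟨i, hi, rfl⟩)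

/-- The Bouligand tangent cone of the s-sparse set is the union, over index sets
`Υ ⊇ supp xb` with card at most `s`, of the coordinate subspaces `span {e i : i ∈ Υ}`. -/
theorem stmt1 {N s : ℕ} (hs : s < N) (xb : Fin N → ℝ)
    (hxb : nrm0 xb ≤ s) :
    BTan {x : Fin N → ℝ | nrm0 x ≤ s} xb
      = ⋃ Y ∈ {Y : Finset (Fin N) | supp xb ⊆ Y ∧ Y.card ≤ s},
          (Submodule.span ℝ ((fun i => (Pi.single i 1 : Fin N → ℝ)) '' (Y : Set (Fin N))) :
            Set (Fin N → ℝ)) := by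
  ext d
  simp only [Set.mem_iUnion, Set.mem_setOf_eq, SetLike.mem_coe, exists_prop]
  constructor
  · rintro ⟨x, lam, hxS, hlam, hx, hlim⟩
    set Y : Finset (Fin N) := supp xb ∪ supp d with hY
    -- eventually each coordinate in Y is nonzero
    have hev : ∀ i ∈ Y, ∀ᶠ k in atTop, x k i ≠ 0 := by
      intro i hi
      rcases Finset.mem_union.mp hi with hi | hi
      · have hne : xb i ≠ 0 := by simpa [supp] using hi
        have : Tendsto (fun k => x k i) atTop (nhds (xb i)) := tendsto_pi_nhds.mp hx i
        exact this (isOpen_ne.mem_nhds hne)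
      · have hdne : d i ≠ 0 := by simpa [supp] using hi
        by_cases hxbz : xb i = 0
        · have : Tendsto (fun k => lam k * (x k i - xb i)) atTop (nhds (d i)) := by
            have := tendsto_pi_nhds.mp hlim i
            simpa [Pi.smul_apply, Pi.sub_apply] using this
          have h2 : ∀ᶠ k in atTop, lam k * (x k i - xb i) ≠ 0 := this (isOpen_ne.mem_nhds hdne)
          filter_upwards [h2] with k hk
          intro hz
          apply hk
          rw [hz, hxbz]; ring
        · have : Tendsto (fun k => x k i) atTop (nhds (xb i)) := tendsto_pi_nhds.mp hx i
          exact this (isOpen_ne.mem_nhds hxbz)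
    have hall : ∀ᶠ k in atTop, ∀ i ∈ Y, x k i ≠ 0 := by
      rw [Filter.eventually_all_finset]
      exact hev
    obtain ⟨k, hk⟩ := hall.exists
    have hsub : Y ⊆ supp (x k) := by
      intro i hi
      simp only [supp, Finset.mem_filter, Finset.mem_univ, true_and]
      exact hk i hi
    have hcard : Y.card ≤ s := le_trans (Finset.card_le_card hsub) (hxS k)
    refine ⟨Y, ⟨Finset.subset_union_left, hcard⟩, ?_⟩
    rw [mem_span_single_iff]
    intro i hi
    by_contra hdi
    exact hi (Finset.mem_union_right _ (by simp [supp, hdi]))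
  · rintro ⟨Y, ⟨hsub, hcard⟩, hdspan⟩
    rw [mem_span_single_iff] at hdspan
    refine ⟨fun k => xb + (1 / ((k : ℝ) + 1)) • d, fun k => (k : ℝ) + 1, ?_, ?_, ?_, ?_⟩
    · intro k
      have hsubs : supp (xb + (1 / ((k : ℝ) + 1)) • d) ⊆ Y := by
        intro i hi
        by_contra hiY
        have h1 : xb i = 0 := by
          by_contra h; exact hiY (hsub (by simp [supp, h]))
        have h2 : d i = 0 := hdspan i hiY
        simp [supp, h1, h2] at hi
      exact le_trans (Finset.card_le_card hsubs) hcard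
    · intro k; positivity
    · have h0 : Tendsto (fun k : ℕ => (1 / ((k : ℝ) + 1)) • d) atTop (nhds ((0 : ℝ) • d)) :=
        (tendsto_one_div_add_atTop_nhds_zero_nat.smul_const d)
      have := (tendsto_const_nhds : Tendsto (fun _ : ℕ => xb) atTop (nhds xb)).add h0
      simpa using this
    · have : ∀ k : ℕ, ((k : ℝ) + 1) • ((xb + (1 / ((k : ℝ) + 1)) • d) - xb) = d := by
        intro k
        have hne : ((k : ℝ) + 1) ≠ 0 := by positivity
        simp [smul_smul, hne]
      simp_rw [this]
      exact tendsto_const_nhds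
end
end

section
/- Let S = {x ∈ ℝ^N : ‖x‖₀ ≤ s} and x̄ ∈ S with Γ = supp(x̄). If |Γ| = s, then the Bouligand normal cone of S at x̄ (the polar of the Bouligand tangent cone) equals span{e_i : i ∉ Γ} = {d ∈ ℝ^N : d_i = 0 for all i ∈ Γ}; if |Γ| < s, then the Bouligand normal cone equals {0}. -/
open Filter Topology

noncomputable section

/-!
Two kinds of tangent directions decide the polar. A coordinate direction `±eᵢ` is tangent as soon
as the whole line `x̄ + t eᵢ` stays `s`-sparse, i.e. when `Γ ∪ {i}` has at most `s` elements; this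
holds for `i ∈ Γ` always and for every `i` when `|Γ| < s`, and pairing `d` with `±eᵢ` forces
`dᵢ = 0`. Conversely, sparse points close to `x̄` have support containing `Γ`, so when `|Γ| = s`
their support is exactly `Γ`, and every tangent direction vanishes off `Γ`.
-/

lemma mem_BTan_of_forall_add_smul_mem {N : ℕ} {S : Set (Fin N → ℝ)} {xb v : Fin N → ℝ}
    (h : ∀ t : ℝ, 0 < t → xb + t • v ∈ S) : v ∈ BTan S xb := by
  have hk : ∀ k : ℕ, (0 : ℝ) < (k : ℝ) + 1 := fun k => by positivity
  refine ⟨fun k => xb + ((k : ℝ) + 1)⁻¹ • v, fun k => (k : ℝ) + 1,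
    fun k => h _ (inv_pos.2 (hk k)), fun k => (hk k).le, ?_, ?_⟩
  · have h0 : Tendsto (fun k : ℕ => ((k : ℝ) + 1)⁻¹) atTop (𝓝 0) := by
      simpa using tendsto_one_div_add_atTop_nhds_zero_nat (𝕜 := ℝ)
    simpa using (h0.smul_const v).const_add xb
  · refine tendsto_const_nhds.congr fun k => ?_
    rw [add_sub_cancel_left, smul_smul, mul_inv_cancel₀ (hk k).ne', one_smul]

lemma supp_add_single_subset {N : ℕ} (x : Fin N → ℝ) (i : Fin N) (c : ℝ) :
    supp (x + Pi.single i c) ⊆ insert i (supp x) := by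
  intro j hj
  by_cases hji : j = i
  · simp [hji]
  · simpa [supp, hji] using hj

lemma single_mem_BTan_sparse {N s : ℕ} {xb : Fin N → ℝ} {i : Fin N}
    (h : (insert i (supp xb)).card ≤ s) (c : ℝ) :
    Pi.single i c ∈ BTan {x : Fin N → ℝ | nrm0 x ≤ s} xb := by
  refine mem_BTan_of_forall_add_smul_mem fun t _ => ?_
  rw [← Pi.single_smul']
  exact (Finset.card_le_card (supp_add_single_subset xb i _)).trans h

lemma apply_eq_zero_of_polar {N : ℕ} {T : Set (Fin N → ℝ)} {d : Fin N → ℝ} {i : Fin N}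
    (hT : ∀ c : ℝ, Pi.single i c ∈ T) (hd : ∀ z ∈ T, ∑ j, d j * z j ≤ 0) : d i = 0 := by
  have h₁ : d i * 1 ≤ 0 := dotProduct_single d 1 i ▸ hd _ (hT 1)
  have h₂ : d i * -1 ≤ 0 := dotProduct_single d (-1) i ▸ hd _ (hT (-1))
  linarith

lemma eventually_supp_subset {N : ℕ} {α : Type*} {l : Filter α} {x : α → Fin N → ℝ}
    {xb : Fin N → ℝ} (hx : Tendsto x l (𝓝 xb)) : ∀ᶠ k in l, supp xb ⊆ supp (x k) := by
  have h : ∀ i ∈ supp xb, ∀ᶠ k in l, x k i ≠ 0 := fun i hi =>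
    (tendsto_pi_nhds.1 hx i).eventually_ne (Finset.mem_filter.1 hi).2
  filter_upwards [(Filter.eventually_all_finset _).2 h] with k hk i hi
  exact Finset.mem_filter.2 ⟨Finset.mem_univ i, hk i hi⟩

lemma BTan_sparse_apply_eq_zero {N s : ℕ} {xb z : Fin N → ℝ} (hcard : (supp xb).card = s)
    (hz : z ∈ BTan {x : Fin N → ℝ | nrm0 x ≤ s} xb) {j : Fin N} (hj : j ∉ supp xb) :
    z j = 0 := by
  obtain ⟨x, lam, hxS, -, hx, hzlim⟩ := hz
  have hxbj : xb j = 0 := by simpa [supp] using hj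
  have hxj : ∀ᶠ k in atTop, x k j = 0 := by
    filter_upwards [eventually_supp_subset hx] with k hk
    have hsupp : supp xb = supp (x k) :=
      Finset.eq_of_subset_of_card_le hk (hcard ▸ hxS k)
    rw [hsupp] at hj
    simpa [supp] using hj
  have hlim : Tendsto (fun k => lam k * (x k j - xb j)) atTop (𝓝 (z j)) := by
    simpa using tendsto_pi_nhds.1 hzlim j
  refine tendsto_nhds_unique hlim (tendsto_const_nhds.congr' ?_)
  filter_upwards [hxj] with k hk
  simp [hk, hxbj]

lemma setOf_forall_mem_apply_eq_zero_eq_span {ι R : Type*} [Fintype ι] [DecidableEq ι]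
    [Semiring R] (I : Set ι) :
    {d : ι → R | ∀ i ∈ I, d i = 0} =
      (Submodule.span R ((fun i => (Pi.single i 1 : ι → R)) '' Iᶜ) : Set (ι → R)) := by
  ext d
  rw [← funext (Pi.basisFun_apply R ι), SetLike.mem_coe, Module.Basis.mem_span_image]
  simp only [Set.mem_ofPred_eq, Set.subset_def, Finset.mem_coe, Finsupp.mem_support_iff,
    Pi.basisFun_repr, Set.mem_compl_iff]
  exact forall_congr' fun _ => not_imp_not.symm

theorem stmt2_general {N s : ℕ} (xb : Fin N → ℝ) :
    ((supp xb).card = s →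
      {d : Fin N → ℝ | ∀ z ∈ BTan {x : Fin N → ℝ | nrm0 x ≤ s} xb, ∑ i, d i * z i ≤ 0}
        = {d : Fin N → ℝ | ∀ i ∈ supp xb, d i = 0} ∧
      {d : Fin N → ℝ | ∀ i ∈ supp xb, d i = 0}
        = (Submodule.span ℝ
            ((fun i => (Pi.single i 1 : Fin N → ℝ)) '' {i : Fin N | i ∉ supp xb}) :
              Set (Fin N → ℝ))) ∧
    ((supp xb).card < s →
      {d : Fin N → ℝ | ∀ z ∈ BTan {x : Fin N → ℝ | nrm0 x ≤ s} xb, ∑ i, d i * z i ≤ 0}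
        = {(0 : Fin N → ℝ)}) := by
  refine ⟨fun hcard => ⟨?_, setOf_forall_mem_apply_eq_zero_eq_span (supp xb : Set (Fin N))⟩,
    fun hcard => ?_⟩
  · ext d
    refine ⟨fun hd i hi => apply_eq_zero_of_polar
      (single_mem_BTan_sparse (by rw [Finset.insert_eq_of_mem hi, hcard])) hd, fun hd z hz => ?_⟩
    refine (Finset.sum_eq_zero fun i _ => ?_).le
    by_cases hi : i ∈ supp xb
    · rw [hd i hi, zero_mul]
    · rw [BTan_sparse_apply_eq_zero hcard hz hi, mul_zero]
  · ext d
    refine ⟨fun hd => funext fun i => apply_eq_zero_of_polar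
      (single_mem_BTan_sparse ((Finset.card_insert_le i _).trans hcard)) hd, ?_⟩
    rintro rfl z -
    simp

/-- Bouligand normal cone of the s-sparse set: if the support of `xb` has exactly `s`
elements it equals `span {e i : i ∉ supp xb} = {d : d i = 0 for i ∈ supp xb}`,
and if it has fewer than `s` elements it equals `{0}`. -/
theorem stmt2 {N s : ℕ} (hs : s < N) (xb : Fin N → ℝ)
    (hxb : nrm0 xb ≤ s) :
    ((supp xb).card = s →
      {d : Fin N → ℝ | ∀ z ∈ BTan {x : Fin N → ℝ | nrm0 x ≤ s} xb, ∑ i, d i * z i ≤ 0}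
        = {d : Fin N → ℝ | ∀ i ∈ supp xb, d i = 0} ∧
      {d : Fin N → ℝ | ∀ i ∈ supp xb, d i = 0}
        = (Submodule.span ℝ
            ((fun i => (Pi.single i 1 : Fin N → ℝ)) '' {i : Fin N | i ∉ supp xb}) :
              Set (Fin N → ℝ))) ∧
    ((supp xb).card < s →
      {d : Fin N → ℝ | ∀ z ∈ BTan {x : Fin N → ℝ | nrm0 x ≤ s} xb, ∑ i, d i * z i ≤ 0}
        = {(0 : Fin N → ℝ)}) :=
  stmt2_general xb
end
end

section
/- Let S = {x ∈ ℝ^N : ‖x‖₀ ≤ s} with s < N and x̄ ∈ S with Γ = supp(x̄). Then the Clarke tangent cone of S at x̄ equals {d ∈ ℝ^N : supp(d) ⊆ Γ} = span{e_i : i ∈ Γ}. -/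
open Filter Topology

noncomputable section

lemma nrm0_eq_card_supp {N : ℕ} (x : Fin N → ℝ) : nrm0 x = (supp x).card := rfl

lemma mem_supp {N : ℕ} (x : Fin N → ℝ) (i : Fin N) : i ∈ supp x ↔ x i ≠ 0 := by
  simp [supp]

lemma ctan_part {N s : ℕ} (hs : s < N) (xb : Fin N → ℝ)
    (hxb : nrm0 xb ≤ s) :
    CTan {x : Fin N → ℝ | nrm0 x ≤ s} xb
      = {d : Fin N → ℝ | supp d ⊆ supp xb} := by
  ext d
  constructor
  · -- CTan ⊆ supp-condition
    intro hd
    by_contra hns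
    simp only [Set.mem_setOf_eq, Finset.subset_iff, not_forall] at hns
    obtain ⟨j, hj1, hj2⟩ := hns
    have hdj : d j ≠ 0 := (mem_supp d j).1 hj1
    have hxbj : xb j = 0 := by
      by_contra h; exact hj2 ((mem_supp xb j).2 h)
    -- choose a set A of size s - card(supp xb) inside (univ \ supp xb).erase j
    have hjns : j ∉ supp xb := hj2
    have hcard : s - (supp xb).card ≤ ((Finset.univ \ supp xb).erase j).card := by
      have h1 : j ∈ Finset.univ \ supp xb := by simp [hjns]
      rw [Finset.card_erase_of_mem h1, Finset.card_sdiff_of_subset (Finset.subset_univ _),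
        Finset.card_univ, Fintype.card_fin]
      omega
    obtain ⟨A, hA, hAcard⟩ := Finset.exists_subset_card_eq hcard
    have hAj : j ∉ A := fun h => (Finset.mem_erase.1 (hA h)).1 rfl
    have hAΓ : ∀ i ∈ A, i ∉ supp xb := fun i hi =>
      (Finset.mem_sdiff.1 (Finset.mem_erase.1 (hA hi)).2).2
    -- sequences
    set c : ℕ → ℝ := fun k => ((k : ℝ) + 1)⁻¹ with hc
    have hcpos : ∀ k, 0 < c k := fun k => by positivity
    have hct : Tendsto c atTop (nhds 0) := tendsto_one_div_add_atTop_nhds_zero_nat.congr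
      (fun k => by simp [hc, one_div])
    set x : ℕ → Fin N → ℝ := fun k i => xb i + c k * (if i ∈ A then 1 else 0) with hxdef
    set lam : ℕ → ℝ := fun k => (c k) ^ 2 with hlamdef
    have hxmem : ∀ k, x k ∈ {x : Fin N → ℝ | nrm0 x ≤ s} := by
      intro k
      have hsub : supp (x k) ⊆ supp xb ∪ A := by
        intro i hi
        rw [mem_supp] at hi
        by_contra h
        simp only [Finset.mem_union, not_or] at h
        have h1 : xb i = 0 := by
          by_contra h'; exact h.1 ((mem_supp xb i).2 h')
        have h2 : i ∉ A := h.2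
        apply hi; simp [hxdef, h1, h2]
      calc nrm0 (x k) ≤ (supp xb ∪ A).card := Finset.card_le_card hsub
        _ ≤ (supp xb).card + A.card := Finset.card_union_le _ _
        _ ≤ s := by rw [hAcard]; rw [nrm0_eq_card_supp] at hxb; omega
    have hlampos : ∀ k, 0 < lam k := fun k => by positivity
    have hxt : Tendsto x atTop (nhds xb) := by
      rw [tendsto_pi_nhds]
      intro i
      simp only [hxdef]
      have : Tendsto (fun k => xb i + c k * (if i ∈ A then 1 else 0)) atTop
          (nhds (xb i + 0 * (if i ∈ A then 1 else 0))) :=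
        tendsto_const_nhds.add (hct.mul tendsto_const_nhds)
      simpa using this
    have hlamt : Tendsto lam atTop (nhds 0) := by
      have := hct.pow 2
      simpa [hlamdef] using this
    obtain ⟨y, hyt, hymem⟩ := hd x lam hxmem hlampos hxt hlamt
    -- eventually, supp(x k + lam k • y k) ⊇ supp xb ∪ A ∪ {j}
    have hyi : ∀ i, Tendsto (fun k => y k i) atTop (nhds (d i)) := by
      rw [tendsto_pi_nhds] at hyt; exact hyt
    have hev : ∀ᶠ k in atTop, ∀ i ∈ supp xb ∪ A ∪ {j}, (x k + lam k • y k) i ≠ 0 := by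
      rw [Filter.eventually_all_finset]
      intro i hi
      simp only [Finset.mem_union, Finset.mem_singleton] at hi
      rcases hi with (hi | hi) | hi
      · -- i ∈ supp xb : coordinate tends to xb i ≠ 0
        have hiA : i ∉ A := fun h => hAΓ i h hi
        have hlim : Tendsto (fun k => (x k + lam k • y k) i) atTop (nhds (xb i)) := by
          have := ((tendsto_pi_nhds.1 hxt) i).add (hlamt.mul (hyi i))
          simpa using this
        exact hlim.eventually_ne ((mem_supp xb i).1 hi)
      · -- i ∈ A : coordinate = c k * (1 + c k * y k i)
        have hixb : xb i = 0 := by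
          by_contra h; exact hAΓ i hi ((mem_supp xb i).2 h)
        have h1 : Tendsto (fun k => 1 + c k * y k i) atTop (nhds 1) := by
          have : Tendsto (fun k => 1 + c k * y k i) atTop (nhds (1 + 0 * d i)) :=
            tendsto_const_nhds.add (hct.mul (hyi i))
          simpa using this
        filter_upwards [h1.eventually_ne one_ne_zero] with k hk
        have : (x k + lam k • y k) i = c k * (1 + c k * y k i) := by
          simp [hxdef, hlamdef, hixb, hi]; ring
        rw [this]
        exact mul_ne_zero (ne_of_gt (hcpos k)) hk
      · -- i = j
        subst hi
        filter_upwards [(hyi i).eventually_ne hdj] with k hk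
        have : (x k + lam k • y k) i = lam k * y k i := by
          simp [hxdef, hAj, hxbj]
        rw [this]
        exact mul_ne_zero (ne_of_gt (hlampos k)) hk
    obtain ⟨k, hk⟩ := hev.exists
    have hsub : supp xb ∪ A ∪ {j} ⊆ supp (x k + lam k • y k) := by
      intro i hi; exact (mem_supp _ i).2 (hk i hi)
    have hcard2 : s + 1 ≤ (supp (x k + lam k • y k)).card := by
      have hj' : j ∉ supp xb ∪ A := by
        simp only [Finset.mem_union, not_or]; exact ⟨hjns, hAj⟩
      have hdisj : Disjoint (supp xb) A := Finset.disjoint_left.2 (fun i hi hiA => hAΓ i hiA hi)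
      have : (supp xb ∪ A ∪ {j}).card = (supp xb).card + A.card + 1 := by
        rw [Finset.union_comm _ {j}, ← Finset.insert_eq, Finset.card_insert_of_notMem hj',
          Finset.card_union_of_disjoint hdisj]
      have hge := Finset.card_le_card hsub
      rw [this, hAcard] at hge
      rw [nrm0_eq_card_supp] at hxb
      omega
    have := hymem k
    rw [Set.mem_setOf_eq, nrm0_eq_card_supp] at this
    omega
  · -- supp-condition ⊆ CTan
    intro hd x lam hxmem hlampos hxt hlamt
    refine ⟨fun k i => if x k i ≠ 0 then d i else 0, ?_, ?_⟩
    · -- tendsto: eventually equal to d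
      have hev : ∀ᶠ k in atTop, (fun i => if x k i ≠ 0 then d i else 0) = d := by
        have h1 : ∀ i, ∀ᶠ k in atTop, (if x k i ≠ 0 then d i else 0) = d i := by
          intro i
          by_cases hi : i ∈ supp xb
          · have hxbne : xb i ≠ 0 := (mem_supp xb i).1 hi
            have : Tendsto (fun k => x k i) atTop (nhds (xb i)) :=
              (tendsto_pi_nhds.1 hxt) i
            filter_upwards [this.eventually_ne hxbne] with k hk
            simp [hk]
          · have hdi : d i = 0 := by
              by_contra h; exact hi (hd ((mem_supp d i).2 h))
            filter_upwards with k
            by_cases h : x k i ≠ 0 <;> simp [h, hdi]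
        have := (Filter.eventually_all (ι := Fin N)).2 h1
        filter_upwards [this] with k hk
        funext i; exact hk i
      exact Tendsto.congr' (hev.mono fun k hk => hk.symm) tendsto_const_nhds
    · intro k
      have hsub : supp (x k + lam k • fun i => if x k i ≠ 0 then d i else 0) ⊆ supp (x k) := by
        intro i hi
        rw [mem_supp] at hi ⊢
        by_contra h
        apply hi
        simp [h]
      calc nrm0 _ ≤ (supp (x k)).card := Finset.card_le_card hsub
        _ ≤ s := hxmem k

lemma span_part {N : ℕ} (xb : Fin N → ℝ) :
    {d : Fin N → ℝ | supp d ⊆ supp xb}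
      = (Submodule.span ℝ
          ((fun i => (Pi.single i 1 : Fin N → ℝ)) '' (supp xb : Set (Fin N))) :
            Set (Fin N → ℝ)) := by
  have hsupp : ∀ (d : Fin N → ℝ) i, i ∈ supp d ↔ d i ≠ 0 := by
    intro d i; simp [supp]
  ext d
  constructor
  · intro hd
    have : d = ∑ i ∈ supp xb, d i • (Pi.single i 1 : Fin N → ℝ) := by
      have h1 : ∀ i, d i • (Pi.single i 1 : Fin N → ℝ) = Pi.single i (d i) := by
        intro i; ext j; by_cases h : j = i <;> simp [Pi.single_apply, h]
      simp_rw [h1]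
      rw [Finset.sum_subset (Finset.subset_univ (supp xb)) (fun i _ hi => by
        have : d i = 0 := by
          by_contra h
          exact hi (hd ((hsupp d i).2 h))
        simp [this])]
      exact (Finset.univ_sum_single d).symm
    rw [this]
    exact Submodule.sum_mem _ (fun i hi => Submodule.smul_mem _ _
      (Submodule.subset_span ⟨i, by simpa using hi, rfl⟩))
  · intro hd
    -- span ≤ submodule of supported vectors
    let M : Submodule ℝ (Fin N → ℝ) :=
      { carrier := {d | supp d ⊆ supp xb}
        add_mem' := by
          intro a b ha hb i hi
          rw [hsupp] at hi
          by_contra hns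
          have ha' : a i = 0 := by
            by_contra h; exact hns (ha ((hsupp a i).2 h))
          have hb' : b i = 0 := by
            by_contra h; exact hns (hb ((hsupp b i).2 h))
          exact hi (by simp [ha', hb'])
        zero_mem' := by intro i hi; rw [hsupp] at hi; simp at hi
        smul_mem' := by
          intro c a ha i hi
          rw [hsupp] at hi
          apply ha
          rw [hsupp]
          intro h; exact hi (by simp [h]) }
    have : Submodule.span ℝ
        ((fun i => (Pi.single i 1 : Fin N → ℝ)) '' (supp xb : Set (Fin N))) ≤ M := by
      rw [Submodule.span_le]
      rintro _ ⟨i, hi, rfl⟩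
      intro j hj
      rw [hsupp] at hj
      have : j = i := by
        by_contra h; exact hj (Pi.single_eq_of_ne h 1)
      subst this; simpa using hi
    exact this hd

/-- The Clarke tangent cone of the s-sparse set at `xb` equals
`{d : supp d ⊆ supp xb} = span {e i : i ∈ supp xb}`. -/
theorem stmt3 {N s : ℕ} (hs : s < N) (xb : Fin N → ℝ)
    (hxb : nrm0 xb ≤ s) :
    CTan {x : Fin N → ℝ | nrm0 x ≤ s} xb
      = {d : Fin N → ℝ | supp d ⊆ supp xb} ∧
    {d : Fin N → ℝ | supp d ⊆ supp xb}
      = (Submodule.span ℝ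
          ((fun i => (Pi.single i 1 : Fin N → ℝ)) '' (supp xb : Set (Fin N))) :
            Set (Fin N → ℝ)) := by
  exact ⟨ctan_part hs xb hxb, span_part xb⟩
end
end

section
/- The Euclidean projection onto S ∩ ℝ^N_+ factors through the nonnegative orthant: for every x ∈ ℝ^N, P_{S ∩ ℝ^N_+}(x) = P_S(P_{ℝ^N_+}(x)), i.e., every point obtained by first taking the componentwise positive part of x and then keeping the s largest entries (setting the rest to zero) is a nearest point of x in S ∩ ℝ^N_+. -/
open Filter Topology

noncomputable section

/-- Hard-thresholding projection onto the s-sparse set: keep the entries of `x` on an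
index set `I` of cardinality `s` consisting of entries of largest magnitude,
and set the others to zero. -/
def HT {N : ℕ} (s : ℕ) (x : Fin N → ℝ) : Set (Fin N → ℝ) :=
  {y | ∃ I : Finset (Fin N), I.card = s ∧ (∀ i ∈ I, y i = x i) ∧ (∀ i ∉ I, y i = 0) ∧
    ∀ i ∈ I, ∀ j ∉ I, |x j| ≤ |x i|}

private lemma aux_eq (a : ℝ) : (a - max a 0)^2 = a^2 - (max a 0)^2 := by
  rcases le_total a 0 with h | h
  · rw [max_eq_right h]; ring
  · rw [max_eq_left h]; ring

private lemma aux_le (a z : ℝ) (hz : 0 ≤ z) : a^2 - (max a 0)^2 ≤ (a - z)^2 := by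
  rcases le_total a 0 with h | h
  · rw [max_eq_right h]; nlinarith
  · rw [max_eq_left h]; nlinarith

private lemma sum_le_topset {N : ℕ} (h : Fin N → ℝ) (hh : ∀ i, 0 ≤ h i)
    (I J : Finset (Fin N)) (hJI : J.card ≤ I.card)
    (htop : ∀ i ∈ I, ∀ j ∉ I, h j ≤ h i) :
    ∑ j ∈ J, h j ≤ ∑ i ∈ I, h i := by
  have h1 := Finset.card_inter_add_card_sdiff J I
  have h2 := Finset.card_inter_add_card_sdiff I J
  rw [Finset.inter_comm] at h2
  have hAB : (J \ I).card ≤ (I \ J).card := by omega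
  rcases Finset.eq_empty_or_nonempty (J \ I) with hA | hA
  · have hsub : J ⊆ I := by rwa [Finset.sdiff_eq_empty_iff_subset] at hA
    exact Finset.sum_le_sum_of_subset_of_nonneg hsub (fun i _ _ => hh i)
  · have hBne : (I \ J).Nonempty := by
      rw [← Finset.card_pos]
      exact lt_of_lt_of_le (Finset.card_pos.2 hA) hAB
    have hIne : I.Nonempty := ⟨hBne.choose, (Finset.mem_sdiff.1 hBne.choose_spec).1⟩
    obtain ⟨i₀, hi₀I, hi₀⟩ := Finset.exists_min_image I h hIne
    have hA_le : ∑ j ∈ J \ I, h j ≤ (J \ I).card • h i₀ :=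
      Finset.sum_le_card_nsmul _ _ _ (fun j hj => htop i₀ hi₀I j (Finset.mem_sdiff.1 hj).2)
    have hB_ge : (I \ J).card • h i₀ ≤ ∑ i ∈ I \ J, h i :=
      Finset.card_nsmul_le_sum _ _ _ (fun i hi => hi₀ i (Finset.mem_sdiff.1 hi).1)
    have hmid : ((J \ I).card : ℝ) * h i₀ ≤ ((I \ J).card : ℝ) * h i₀ :=
      mul_le_mul_of_nonneg_right (by exact_mod_cast hAB) (hh i₀)
    rw [nsmul_eq_mul] at hA_le hB_ge
    calc ∑ j ∈ J, h j = ∑ j ∈ J ∩ I, h j + ∑ j ∈ J \ I, h j :=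
          (Finset.sum_inter_add_sum_sdiff J I h).symm
    _ ≤ ∑ j ∈ J ∩ I, h j + ∑ i ∈ I \ J, h i := by linarith
    _ = ∑ i ∈ I, h i := by
        rw [Finset.inter_comm]; exact Finset.sum_inter_add_sum_sdiff I J h

private lemma exists_topset {N : ℕ} (h : Fin N → ℝ) :
    ∀ s : ℕ, s ≤ N → ∃ I : Finset (Fin N), I.card = s ∧ ∀ i ∈ I, ∀ j ∉ I, h j ≤ h i := by
  intro s
  induction s with
  | zero => exact fun _ => ⟨∅, rfl, by simp⟩
  | succ n ih =>
    intro hsN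
    obtain ⟨I, hcard, htop⟩ := ih (Nat.le_of_succ_le hsN)
    have hne : (Finset.univ \ I).Nonempty := by
      rw [← Finset.card_pos, Finset.card_sdiff_of_subset (Finset.subset_univ I)]
      simp only [Finset.card_univ, Fintype.card_fin, hcard]
      omega
    obtain ⟨m, hm, hmax⟩ := Finset.exists_max_image _ h hne
    have hmI : m ∉ I := (Finset.mem_sdiff.1 hm).2
    refine ⟨insert m I, by rw [Finset.card_insert_of_notMem hmI, hcard], ?_⟩
    intro i hi j hj
    have hjI : j ∉ I := fun hjI => hj (Finset.mem_insert_of_mem hjI)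
    rcases Finset.mem_insert.1 hi with rfl | hiI
    · exact hmax j (Finset.mem_sdiff.2 ⟨Finset.mem_univ j, hjI⟩)
    · exact htop i hiI j hjI


/-- The Euclidean projection onto `S ∩ ℝ^N₊` factors: it equals the hard-thresholding
projection applied to the componentwise positive part. -/
theorem stmt6 {N s : ℕ} (hs : s ≤ N) (x : Fin N → ℝ) :
    Proj {y : Fin N → ℝ | nrm0 y ≤ s ∧ ∀ i, 0 ≤ y i} x
      = HT s (fun i => max (x i) 0) := by
  set g : Fin N → ℝ := fun i => max (x i) 0 with hgdef
  have hg : ∀ i, 0 ≤ g i := fun i => le_max_right _ _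
  set q : Fin N → ℝ := fun i => (g i)^2 with hqdef
  have hq : ∀ i, 0 ≤ q i := fun i => sq_nonneg _
  have lower : ∀ z : Fin N → ℝ, (∀ i, 0 ≤ z i) →
      (∑ i, (x i)^2) - ∑ i ∈ supp z, q i ≤ ∑ i, (x i - z i)^2 := by
    intro z hz
    have h1 : (∑ i, (x i)^2) - ∑ i ∈ supp z, q i
        = ∑ i, ((x i)^2 - if i ∈ supp z then q i else 0) := by
      rw [Finset.sum_sub_distrib, Finset.sum_ite_mem, Finset.univ_inter]
    rw [h1]
    apply Finset.sum_le_sum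
    intro i _
    by_cases hi : i ∈ supp z
    · simp only [hi, if_true]
      exact aux_le (x i) (z i) (hz i)
    · have hzi : z i = 0 := by
        by_contra hne
        exact hi (Finset.mem_filter.2 ⟨Finset.mem_univ i, hne⟩)
      simp [hi, hzi]
  have htval : ∀ (y : Fin N → ℝ) (I : Finset (Fin N)),
      (∀ i ∈ I, y i = g i) → (∀ i ∉ I, y i = 0) →
      ∑ i, (x i - y i)^2 = (∑ i, (x i)^2) - ∑ i ∈ I, q i := by
    intro y I hyI hy0
    have h1 : (∑ i, (x i)^2) - ∑ i ∈ I, q i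
        = ∑ i, ((x i)^2 - if i ∈ I then q i else 0) := by
      rw [Finset.sum_sub_distrib, Finset.sum_ite_mem, Finset.univ_inter]
    rw [h1]
    apply Finset.sum_congr rfl
    intro i _
    by_cases hi : i ∈ I
    · simp only [hi, if_true, hyI i hi]
      exact aux_eq (x i)
    · simp [hi, hy0 i hi]
  have dir1 : ∀ y ∈ HT s g, y ∈ Proj {y : Fin N → ℝ | nrm0 y ≤ s ∧ ∀ i, 0 ≤ y i} x := by
    intro y hy
    obtain ⟨I, hIcard, hyI, hy0, habs⟩ := hy
    have hqtop : ∀ i ∈ I, ∀ j ∉ I, q j ≤ q i := by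
      intro i hi j hj
      have h2 := habs i hi j hj
      rw [abs_of_nonneg (hg j), abs_of_nonneg (hg i)] at h2
      exact pow_le_pow_left₀ (hg j) h2 2
    have hsupp : supp y ⊆ I := by
      intro i hi
      by_contra hiI
      exact (Finset.mem_filter.1 hi).2 (hy0 i hiI)
    have hmem : nrm0 y ≤ s ∧ ∀ i, 0 ≤ y i := by
      constructor
      · calc nrm0 y = (supp y).card := rfl
        _ ≤ I.card := Finset.card_le_card hsupp
        _ = s := hIcard
      · intro i
        by_cases hi : i ∈ I
        · rw [hyI i hi]; exact hg i
        · rw [hy0 i hi]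
    refine ⟨hmem, ?_⟩
    intro z hz
    obtain ⟨hz1, hz2⟩ := hz
    have hval := htval y I hyI hy0
    rw [hval]
    have hlb := lower z hz2
    have hsz : (supp z).card ≤ I.card := by
      rw [hIcard]; exact hz1
    have h3 := sum_le_topset q hq I (supp z) hsz hqtop
    linarith
  apply Set.eq_of_subset_of_subset ?_ (fun y hy => dir1 y hy)
  intro y hy
  obtain ⟨⟨hy1, hy2⟩, hymin⟩ := hy
  obtain ⟨I, hIcard, hItop⟩ := exists_topset g s hs
  have hqtop : ∀ i ∈ I, ∀ j ∉ I, q j ≤ q i := fun i hi j hj =>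
    pow_le_pow_left₀ (hg j) (hItop i hi j hj) 2
  set y₀ : Fin N → ℝ := fun i => if i ∈ I then g i else 0 with hy₀def
  have hy₀HT : y₀ ∈ HT s g := by
    refine ⟨I, hIcard, fun i hi => by simp [hy₀def, hi], fun i hi => by simp [hy₀def, hi], ?_⟩
    intro i hi j hj
    rw [abs_of_nonneg (hg j), abs_of_nonneg (hg i)]
    exact hItop i hi j hj
  obtain ⟨hy₀mem, hy₀min⟩ := dir1 y₀ hy₀HT
  have hfy₀ : ∑ i, (x i - y₀ i)^2 = (∑ i, (x i)^2) - ∑ i ∈ I, q i :=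
    htval y₀ I (fun i hi => by simp [hy₀def, hi]) (fun i hi => by simp [hy₀def, hi])
  set J₀ : Finset (Fin N) := supp y with hJ₀def
  have hJ₀card : J₀.card ≤ s := hy1
  have hA : ∑ i ∈ J₀, q i ≤ ∑ i ∈ I, q i :=
    sum_le_topset q hq I J₀ (by rw [hIcard]; exact hy1) hqtop
  have hBle := lower y hy2
  have h1 : ∑ i, (x i - y i)^2 ≤ ∑ i, (x i - y₀ i)^2 := hymin y₀ hy₀mem
  have h2 : ∑ i, (x i - y₀ i)^2 ≤ ∑ i, (x i - y i)^2 := hy₀min y ⟨hy1, hy2⟩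
  have heqf : ∑ i, (x i - y i)^2 = (∑ i, (x i)^2) - ∑ i ∈ J₀, q i := by linarith
  have hsumeq : ∑ i ∈ J₀, q i = ∑ i ∈ I, q i := by linarith
  have hterm : ∀ i, (x i)^2 - (if i ∈ J₀ then q i else 0) = (x i - y i)^2 := by
    have hle : ∀ i ∈ Finset.univ, (x i)^2 - (if i ∈ J₀ then q i else 0) ≤ (x i - y i)^2 := by
      intro i _
      by_cases hi : i ∈ J₀
      · simp only [hi, if_true]; exact aux_le (x i) (y i) (hy2 i)
      · have hzi : y i = 0 := by
          by_contra hne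
          exact hi (Finset.mem_filter.2 ⟨Finset.mem_univ i, hne⟩)
        simp [hi, hzi]
    have hsum : ∑ i, ((x i)^2 - (if i ∈ J₀ then q i else 0)) = ∑ i, (x i - y i)^2 := by
      rw [Finset.sum_sub_distrib, Finset.sum_ite_mem, Finset.univ_inter, heqf]
    intro i
    exact (Finset.sum_eq_sum_iff_of_le hle).1 hsum i (Finset.mem_univ i)
  have hyg : ∀ i ∈ J₀, y i = g i := by
    intro i hi
    have hyi : y i ≠ 0 := (Finset.mem_filter.1 hi).2
    have hypos : 0 < y i := lt_of_le_of_ne (hy2 i) (Ne.symm hyi)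
    have ht := hterm i
    rw [if_pos hi] at ht
    have hqi : q i = (g i)^2 := rfl
    rcases le_total (x i) 0 with h | h
    · exfalso
      have hgi : g i = 0 := max_eq_right h
      rw [hqi, hgi] at ht
      nlinarith
    · have hgi : g i = x i := max_eq_left h
      rw [hqi, hgi] at ht
      have hz0 : (x i - y i)^2 = 0 := by nlinarith
      have hz1' : x i - y i = 0 := (pow_eq_zero_iff two_ne_zero).mp hz0
      rw [hgi]
      linarith
  have hmaxJ : ∀ K : Finset (Fin N), K.card ≤ s → ∑ i ∈ K, q i ≤ ∑ i ∈ J₀, q i := by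
    intro K hK
    rw [hsumeq]
    exact sum_le_topset q hq I K (by rw [hIcard]; exact hK) hqtop
  rcases lt_or_eq_of_le hJ₀card with hlt | heqc
  · have hout : ∀ j ∉ J₀, g j = 0 := by
      intro j hj
      by_contra hne
      have hgj : 0 < g j := lt_of_le_of_ne (hg j) (Ne.symm hne)
      have hqj : 0 < q j := by
        have : q j = (g j)^2 := rfl
        rw [this]; positivity
      have hK := hmaxJ (insert j J₀) (by rw [Finset.card_insert_of_notMem hj]; omega)
      rw [Finset.sum_insert hj] at hK
      linarith
    obtain ⟨J, hJ₀J, _, hJcard⟩ := Finset.exists_subsuperset_card_eq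
      (Finset.subset_univ J₀) hJ₀card (by simpa using hs)
    refine ⟨J, hJcard, ?_, ?_, ?_⟩
    · intro i hi
      by_cases hiJ₀ : i ∈ J₀
      · exact hyg i hiJ₀
      · have hyi : y i = 0 := by
          by_contra hne
          exact hiJ₀ (Finset.mem_filter.2 ⟨Finset.mem_univ i, hne⟩)
        rw [hyi, hout i hiJ₀]
    · intro i hi
      by_contra hne
      exact hi (hJ₀J (Finset.mem_filter.2 ⟨Finset.mem_univ i, hne⟩))
    · intro i _ j hj
      have hjJ₀ : j ∉ J₀ := fun h => hj (hJ₀J h)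
      rw [hout j hjJ₀, abs_zero]
      exact abs_nonneg _
  · refine ⟨J₀, heqc, hyg, ?_, ?_⟩
    · intro i hi
      by_contra hne
      exact hi (Finset.mem_filter.2 ⟨Finset.mem_univ i, hne⟩)
    · intro i hi j hj
      rw [abs_of_nonneg (hg j), abs_of_nonneg (hg i)]
      by_contra hlt2
      push_neg at hlt2
      have hqlt : q i < q j := pow_lt_pow_left₀ hlt2 (hg i) two_ne_zero
      have hjK : j ∉ J₀.erase i := fun h => hj (Finset.mem_of_mem_erase h)
      have hcardK : (insert j (J₀.erase i)).card ≤ s := by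
        rw [Finset.card_insert_of_notMem hjK, Finset.card_erase_of_mem hi]
        have hc1 : 1 ≤ J₀.card := Finset.card_pos.2 ⟨i, hi⟩
        omega
      have hK := hmaxJ _ hcardK
      rw [Finset.sum_insert hjK, Finset.sum_erase_eq_sub hi] at hK
      linarith
end
end

section
/- For any x̄ ∈ S ∩ ℝ^N_+ with Γ = supp(x̄), the Bouligand tangent cone of S ∩ ℝ^N_+ at x̄ equals T^B_S(x̄) ∩ {x ∈ ℝ^N : x_i ≥ 0 for all i ∉ Γ}. -/
open Filter Topology

noncomputable section

/-- The Bouligand tangent cone of `S ∩ ℝ^N₊` at a nonnegative s-sparse point `xb`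
equals `T^B_S(xb) ∩ {x : x i ≥ 0 for all i ∉ supp xb}`. -/
theorem stmt9 {N s : ℕ} (xb : Fin N → ℝ) (hxb : nrm0 xb ≤ s)
    (hpos : ∀ i, 0 ≤ xb i) :
    BTan {x : Fin N → ℝ | nrm0 x ≤ s ∧ ∀ i, 0 ≤ x i} xb
      = BTan {x : Fin N → ℝ | nrm0 x ≤ s} xb ∩
          {x : Fin N → ℝ | ∀ i, i ∉ supp xb → 0 ≤ x i} := by
  ext d
  constructor
  · rintro ⟨x, lam, hmem, hlam, hx, hd⟩
    refine ⟨⟨x, lam, fun k => (hmem k).1, hlam, hx, hd⟩, ?_⟩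
    intro i hi
    have hxbi : xb i = 0 := by
      by_contra h
      exact hi (by simp [supp, h])
    have hco : Tendsto (fun k => lam k * (x k i - xb i)) atTop (nhds (d i)) := by
      have := (tendsto_pi_nhds.mp hd) i
      simpa using this
    refine ge_of_tendsto' hco (fun k => ?_)
    rw [hxbi, sub_zero]
    exact mul_nonneg (hlam k) ((hmem k).2 i)
  · rintro ⟨⟨x, lam, hmem, hlam, hx, hd⟩, hdpos⟩
    -- supp xb ∪ supp d has card ≤ s
    have hcard : (supp xb ∪ supp d).card ≤ s := by
      have hev : ∀ᶠ k in atTop, ∀ i ∈ supp xb ∪ supp d, x k i ≠ 0 := by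
        rw [Filter.eventually_all_finset]
        intro i hi
        rcases Finset.mem_union.mp hi with hi | hi
        · have hne : xb i ≠ 0 := by simpa [supp] using hi
          exact ((tendsto_pi_nhds.mp hx) i).eventually_ne hne
        · by_cases hxi : xb i = 0
          · have hne : d i ≠ 0 := by simpa [supp] using hi
            have hco : Tendsto (fun k => lam k * (x k i - xb i)) atTop (nhds (d i)) := by
              have := (tendsto_pi_nhds.mp hd) i
              simpa using this
            filter_upwards [hco.eventually_ne hne] with k hk
            intro h0
            exact hk (by rw [h0, hxi]; ring)
          · exact ((tendsto_pi_nhds.mp hx) i).eventually_ne hxi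
      rcases hev.exists with ⟨k, hk⟩
      calc (supp xb ∪ supp d).card ≤ (supp (x k)).card := by
            apply Finset.card_le_card
            intro i hi
            simp only [supp, Finset.mem_filter, Finset.mem_univ, true_and]
            exact hk i hi
        _ ≤ s := hmem k
    -- d is nonneg off supp xb
    have hdnn : ∀ i, xb i = 0 → 0 ≤ d i := by
      intro i h0
      exact hdpos i (by simp [supp, h0])
    refine ⟨fun k i => max (xb i + (1 / (k + 1 : ℝ)) * d i) 0,
      fun k => (k + 1 : ℝ), fun k => ⟨?_, fun i => le_max_right _ _⟩,
      fun k => by positivity, ?_, ?_⟩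
    · -- sparsity of y k
      refine le_trans (le_trans (Finset.card_le_card ?_) le_rfl) hcard
      intro i hi
      simp only [nrm0] at *
      simp only [Finset.mem_filter, Finset.mem_univ, true_and] at hi
      by_contra h
      simp only [Finset.mem_union, supp, Finset.mem_filter, Finset.mem_univ, true_and,
        not_or, not_not] at h
      exact hi (by rw [h.1, h.2]; simp)
    · -- y k → xb
      rw [tendsto_pi_nhds]
      intro i
      have h1 : Tendsto (fun k : ℕ => xb i + (1 / (k + 1 : ℝ)) * d i) atTop (nhds (xb i)) := by
        have := tendsto_one_div_add_atTop_nhds_zero_nat.mul_const (d i)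
        have := (tendsto_const_nhds (x := xb i) (f := (atTop : Filter ℕ))).add this
        simpa using this
      have := h1.max (tendsto_const_nhds (x := (0:ℝ)))
      simpa [max_eq_left (hpos i)] using this
    · -- lam • (y - xb) → d
      rw [tendsto_pi_nhds]
      intro i
      rcases eq_or_lt_of_le (hpos i) with h0 | h0
      · -- xb i = 0
        have hdi : 0 ≤ d i := hdnn i h0.symm
        have : ∀ k : ℕ, ((k + 1 : ℝ) • ((fun i => max (xb i + (1 / (k + 1 : ℝ)) * d i) 0) - xb)) i = d i := by
          intro k
          have hk : (k + 1 : ℝ) ≠ 0 := by positivity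
          simp only [Pi.smul_apply, Pi.sub_apply, smul_eq_mul, ← h0]
          rw [max_eq_left (by positivity), sub_zero, zero_add]
          field_simp
        exact Tendsto.congr (fun k => (this k).symm) tendsto_const_nhds
      · -- xb i > 0
        have h1 : Tendsto (fun k : ℕ => xb i + (1 / (k + 1 : ℝ)) * d i) atTop (nhds (xb i)) := by
          have := tendsto_one_div_add_atTop_nhds_zero_nat.mul_const (d i)
          have := (tendsto_const_nhds (x := xb i) (f := (atTop : Filter ℕ))).add this
          simpa using this
        have hev : ∀ᶠ k : ℕ in atTop, 0 < xb i + (1 / (k + 1 : ℝ)) * d i :=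
          h1.eventually (eventually_gt_nhds h0 : ∀ᶠ y in nhds (xb i), 0 < y)
        refine Tendsto.congr' ?_ (tendsto_const_nhds (x := d i) (f := (atTop : Filter ℕ)))
        filter_upwards [hev] with k hk
        have hkne : (k + 1 : ℝ) ≠ 0 := by positivity
        simp only [Pi.smul_apply, Pi.sub_apply, smul_eq_mul]
        rw [max_eq_left hk.le]
        field_simp
        ring
end
end

section
/- Let f : ℝ^N → ℝ be continuously differentiable, S the set of s-sparse vectors, and x* ∈ S with ‖x*‖₀ < s. Then x* is an α-stationary point of min f over S for some α > 0 (i.e., x* ∈ P_S(x* − α∇f(x*))) if and only if ∇f(x*) = 0. -/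
open Filter Topology

noncomputable section

/-- For a continuously differentiable `f` and a point `x` with `‖x‖₀ < s`,
`x` is an α-stationary point of `min f` over the s-sparse set for some `α > 0`
iff `∇f(x) = 0`. -/
theorem stmt11 {N s : ℕ} (f : (Fin N → ℝ) → ℝ) (hf : ContDiff ℝ 1 f)
    (x : Fin N → ℝ) (hx : nrm0 x < s) :
    (∃ α : ℝ, 0 < α ∧
      x ∈ Proj {y : Fin N → ℝ | nrm0 y ≤ s}
            (x - α • fun i => fderiv ℝ f x (Pi.single i 1))) ↔
      ∀ i, fderiv ℝ f x (Pi.single i 1) = 0 := by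
  set g : Fin N → ℝ := fun i => fderiv ℝ f x (Pi.single i 1) with hg
  constructor
  · rintro ⟨α, hα, hxS, hproj⟩ i
    set w : Fin N → ℝ := x - α • g with hw
    set z : Fin N → ℝ := Function.update x i (w i) with hz
    have hzx : ∀ j, j ≠ i → z j = x j := fun j hj =>
      Function.update_of_ne hj _ _
    have hzS : z ∈ {y : Fin N → ℝ | nrm0 y ≤ s} := by
      have hsub : (Finset.univ.filter (fun j => z j ≠ 0)) ⊆
          insert i (Finset.univ.filter (fun j => x j ≠ 0)) := by
        intro j hj
        simp only [Finset.mem_filter, Finset.mem_univ, true_and] at hj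
        by_cases hji : j = i
        · simp [hji]
        · simp only [Finset.mem_insert, Finset.mem_filter, Finset.mem_univ,
            true_and]
          right; rw [← hzx j hji]; exact hj
      have : nrm0 z ≤ nrm0 x + 1 := by
        calc nrm0 z ≤ (insert i (Finset.univ.filter (fun j => x j ≠ 0))).card :=
              Finset.card_le_card hsub
          _ ≤ nrm0 x + 1 := Finset.card_insert_le _ _
      exact le_trans this hx
    have key := hproj z hzS
    have h1 : ∑ j, (w j - x j) ^ 2 =
        (w i - x i) ^ 2 + ∑ j ∈ Finset.univ.erase i, (w j - x j) ^ 2 :=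
      (Finset.add_sum_erase _ _ (Finset.mem_univ i)).symm
    have h2 : ∑ j, (w j - z j) ^ 2 =
        ∑ j ∈ Finset.univ.erase i, (w j - x j) ^ 2 := by
      rw [← Finset.add_sum_erase _ (fun j => (w j - z j) ^ 2) (Finset.mem_univ i)]
      have hzi : z i = w i := Function.update_self _ _ _
      rw [hzi]
      simp only [sub_self, ne_eq, OfNat.ofNat_ne_zero, not_false_eq_true,
        zero_pow, zero_add]
      exact Finset.sum_congr rfl fun j hj => by
        rw [hzx j (Finset.ne_of_mem_erase hj)]
    rw [h1, h2] at key
    have hsq : (w i - x i) ^ 2 ≤ 0 := by linarith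
    have hwi : w i = x i := by
      have := le_antisymm hsq (sq_nonneg _)
      have := pow_eq_zero_iff (n := 2) (by norm_num) |>.mp this
      linarith
    have : x i - α * g i = x i := by
      simpa [hw, Pi.sub_apply, Pi.smul_apply, smul_eq_mul] using hwi
    have : α * g i = 0 := by linarith
    exact (mul_eq_zero.mp this).resolve_left (ne_of_gt hα)
  · intro h
    refine ⟨1, one_pos, ?_, ?_⟩
    · exact le_of_lt hx
    · intro z hz
      have hgz : g = 0 := funext h
      have hwx : (x - (1 : ℝ) • g) = x := by simp [hgz]
      rw [hwx]
      simp only [sub_self, ne_eq, OfNat.ofNat_ne_zero, not_false_eq_true,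
        zero_pow]
      simp only [Finset.sum_const_zero]
      exact Finset.sum_nonneg fun j _ => sq_nonneg _
end
end

section
/- Suppose A ∈ ℝ^{M×N} is s-regular. Then the set of α-stationary points of the problem min (1/2)‖Ax − b‖² subject to ‖x‖₀ ≤ s, x ≥ 0 is finite; in fact its cardinality is at most Σ_{i=0}^{s} C(N, i). -/
open Filter Topology

noncomputable section

/-- the `s`-th largest entry of `x`. -/
def Ms {N : ℕ} (s : ℕ) (x : Fin N → ℝ) : ℝ :=
  sSup {t : ℝ | s ≤ (Finset.univ.filter (fun i => t ≤ x i)).card}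

lemma aux_sum {M N : ℕ} (A : Matrix (Fin M) (Fin N) ℝ) (v : Fin M → ℝ) (d : Fin N → ℝ) :
    ∑ j, A.mulVec d j * v j = ∑ i, d i * A.transpose.mulVec v i := by
  simp only [Matrix.mulVec, dotProduct, Matrix.transpose_apply, Finset.sum_mul,
    Finset.mul_sum]
  rw [Finset.sum_comm]
  apply Finset.sum_congr rfl; intro i _
  apply Finset.sum_congr rfl; intro j _
  ring

lemma inj_key {M N s : ℕ} (A : Matrix (Fin M) (Fin N) ℝ)
    (hreg : ∀ d : Fin N → ℝ, d ≠ 0 → nrm0 d ≤ s → 0 < ∑ j, (A.mulVec d j) ^ 2)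
    (b : Fin M → ℝ) (x y : Fin N → ℝ)
    (hxs : nrm0 x ≤ s)
    (hx : ∀ i, x i ≠ 0 → A.transpose.mulVec (A.mulVec x - b) i = 0)
    (hy : ∀ i, y i ≠ 0 → A.transpose.mulVec (A.mulVec y - b) i = 0)
    (hsupp : supp x = supp y) : x = y := by
  by_contra hne
  set d := x - y with hd
  have hdne : d ≠ 0 := sub_ne_zero.mpr hne
  have hmem : ∀ i, d i ≠ 0 → x i ≠ 0 ∧ y i ≠ 0 := by
    intro i hi
    have hxy : x i ≠ 0 ∨ y i ≠ 0 := by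
      by_contra h
      push_neg at h
      exact hi (by simp [hd, h.1, h.2])
    have hiff : x i ≠ 0 ↔ y i ≠ 0 := by
      constructor <;> intro h
      · have : i ∈ supp x := Finset.mem_filter.mpr ⟨Finset.mem_univ i, h⟩
        rw [hsupp] at this
        exact (Finset.mem_filter.mp this).2
      · have : i ∈ supp y := Finset.mem_filter.mpr ⟨Finset.mem_univ i, h⟩
        rw [← hsupp] at this
        exact (Finset.mem_filter.mp this).2
    rcases hxy with h | h
    · exact ⟨h, hiff.mp h⟩
    · exact ⟨hiff.mpr h, h⟩
  have hds : nrm0 d ≤ s := by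
    refine le_trans (Finset.card_le_card ?_) hxs
    intro i hi
    simp only [Finset.mem_filter, Finset.mem_univ, true_and] at hi ⊢
    exact (hmem i hi).1
  have hpos := hreg d hdne hds
  have hAd : A.mulVec d = A.mulVec x - A.mulVec y := by
    rw [hd, Matrix.mulVec_sub]
  have h1 : ∑ j, A.mulVec d j * (A.mulVec x - b) j = 0 := by
    rw [aux_sum]
    apply Finset.sum_eq_zero
    intro i _
    by_cases hdi : d i = 0
    · simp [hdi]
    · rw [hx i (hmem i hdi).1, mul_zero]
  have h2 : ∑ j, A.mulVec d j * (A.mulVec y - b) j = 0 := by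
    rw [aux_sum]
    apply Finset.sum_eq_zero
    intro i _
    by_cases hdi : d i = 0
    · simp [hdi]
    · rw [hy i (hmem i hdi).2, mul_zero]
  have : ∑ j, (A.mulVec d j) ^ 2 = 0 := by
    have : ∀ j, (A.mulVec d j) ^ 2
        = A.mulVec d j * (A.mulVec x - b) j - A.mulVec d j * (A.mulVec y - b) j := by
      intro j
      have : A.mulVec d j = (A.mulVec x - b) j - (A.mulVec y - b) j := by
        rw [hAd]; simp only [Pi.sub_apply]; ring
      rw [this]; ring
    simp only [this, Finset.sum_sub_distrib, h1, h2, sub_zero]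
  linarith

lemma card_small_finsets (N s : ℕ) :
    ({Γ : Finset (Fin N) | Γ.card ≤ s} : Set (Finset (Fin N))).ncard
      ≤ ∑ i ∈ Finset.range (s + 1), N.choose i := by
  have he : ({Γ : Finset (Fin N) | Γ.card ≤ s} : Set (Finset (Fin N)))
      = ↑(Finset.univ.filter (fun Γ : Finset (Fin N) => Γ.card ≤ s)) := by
    ext Γ; simp
  rw [he, Set.ncard_coe_finset]
  rw [Finset.card_eq_sum_card_fiberwise
    (f := fun Γ : Finset (Fin N) => Γ.card) (t := Finset.range (s + 1))
    (by intro Γ hΓ; simp at hΓ ⊢; omega)]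
  apply Finset.sum_le_sum
  intro i _
  have : (Finset.univ.filter (fun Γ : Finset (Fin N) => Γ.card ≤ s)).filter
      (fun Γ => Γ.card = i) ⊆ Finset.powersetCard i Finset.univ := by
    intro Γ hΓ
    simp only [Finset.mem_filter] at hΓ
    rw [Finset.mem_powersetCard_univ]
    exact hΓ.2
  calc _ ≤ (Finset.powersetCard i (Finset.univ : Finset (Fin N))).card :=
        Finset.card_le_card this
    _ = N.choose i := by rw [Finset.card_powersetCard, Finset.card_univ, Fintype.card_fin]


/-- If `A` is s-regular, the set of α-stationary points of
`min (1/2)‖Ax - b‖²  s.t. ‖x‖₀ ≤ s, x ≥ 0` is finite, with cardinality at most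
`∑_{i=0}^{s} C(N,i)`. -/
theorem stmt17 {M N s : ℕ} (A : Matrix (Fin M) (Fin N) ℝ)
    (hreg : ∀ d : Fin N → ℝ, d ≠ 0 → nrm0 d ≤ s → 0 < ∑ j, (A.mulVec d j) ^ 2)
    (b : Fin M → ℝ) (α : ℝ) (hα : 0 < α) :
    {x : Fin N → ℝ | nrm0 x ≤ s ∧ (∀ i, 0 ≤ x i) ∧
        (∀ i, x i ≠ 0 → A.transpose.mulVec (A.mulVec x - b) i = 0) ∧
        (∀ i, x i = 0 →
          0 ≤ A.transpose.mulVec (A.mulVec x - b) i ∨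
          (-(1 / α) * Ms s x ≤ A.transpose.mulVec (A.mulVec x - b) i ∧
            A.transpose.mulVec (A.mulVec x - b) i ≤ 0))}.Finite ∧
    {x : Fin N → ℝ | nrm0 x ≤ s ∧ (∀ i, 0 ≤ x i) ∧
        (∀ i, x i ≠ 0 → A.transpose.mulVec (A.mulVec x - b) i = 0) ∧
        (∀ i, x i = 0 →
          0 ≤ A.transpose.mulVec (A.mulVec x - b) i ∨
          (-(1 / α) * Ms s x ≤ A.transpose.mulVec (A.mulVec x - b) i ∧
            A.transpose.mulVec (A.mulVec x - b) i ≤ 0))}.ncard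
      ≤ ∑ i ∈ Finset.range (s + 1), N.choose i := by
  set S := {x : Fin N → ℝ | nrm0 x ≤ s ∧ (∀ i, 0 ≤ x i) ∧
        (∀ i, x i ≠ 0 → A.transpose.mulVec (A.mulVec x - b) i = 0) ∧
        (∀ i, x i = 0 →
          0 ≤ A.transpose.mulVec (A.mulVec x - b) i ∨
          (-(1 / α) * Ms s x ≤ A.transpose.mulVec (A.mulVec x - b) i ∧
            A.transpose.mulVec (A.mulVec x - b) i ≤ 0))} with hS
  have hinj : Set.InjOn (supp (N := N)) S := by
    intro x hx y hy hxy
    exact inj_key A hreg b x y hx.1 hx.2.2.1 hy.2.2.1 hxy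
  have hmaps : Set.MapsTo (supp (N := N)) S {Γ : Finset (Fin N) | Γ.card ≤ s} := by
    intro x hx
    exact hx.1
  have hT : ({Γ : Finset (Fin N) | Γ.card ≤ s} : Set (Finset (Fin N))).Finite :=
    Set.toFinite _
  have hfin : S.Finite := Set.Finite.of_finite_image (hT.subset (Set.image_subset_iff.mpr hmaps)) hinj
  refine ⟨hfin, ?_⟩
  calc S.ncard ≤ ({Γ : Finset (Fin N) | Γ.card ≤ s} : Set (Finset (Fin N))).ncard :=
        Set.ncard_le_ncard_of_injOn _ hmaps hinj hT
    _ ≤ ∑ i ∈ Finset.range (s + 1), N.choose i := card_small_finsets N s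
end
end

section
/- Suppose A ∈ ℝ^{M×N} is s-regular. Then the problem min (1/2)‖Ax − b‖² subject to ‖x‖₀ ≤ s, x ≥ 0 attains a global minimizer. -/
open Filter Topology

noncomputable section

/-!
On the cone of `s`-sparse vectors, `s`-regularity makes `x ↦ A x` bounded below in norm on the
unit sphere (a compact set on which it does not vanish), so `‖A x‖ ≥ c ‖x‖` for some `c > 0`
and every `s`-sparse `x`. Hence the residual `‖A x - b‖` grows at infinity along the feasible
set, which is closed since the support can only grow under small perturbations; a continuous
function with this growth attains its minimum on a nonempty closed set.
-/

section Coercive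

variable {E F : Type*} [NormedAddCommGroup E] [NormedSpace ℝ E] [ProperSpace E]
  [NormedAddCommGroup F] [NormedSpace ℝ F]

theorem exists_pos_mul_norm_le_norm_apply_on_cone {S : Set E} (hS : IsClosed S)
    (hS_smul : ∀ x ∈ S, ∀ t : ℝ, 0 < t → t • x ∈ S) (L : E →L[ℝ] F)
    (hL : ∀ x ∈ S, x ≠ 0 → L x ≠ 0) :
    ∃ c > 0, ∀ x ∈ S, c * ‖x‖ ≤ ‖L x‖ := by
  have hK : IsCompact (S ∩ Metric.sphere 0 1) :=
    (isCompact_sphere 0 1).inter_left hS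
  obtain ⟨c, hc, hcK⟩ := hK.exists_forall_le' (a := 0) (continuous_norm.comp L.continuous).continuousOn
    fun x ⟨hxS, hx1⟩ => norm_pos_iff.2 <| hL x hxS <| ne_zero_of_mem_unit_sphere ⟨x, hx1⟩
  refine ⟨c, hc, fun x hxS => ?_⟩
  rcases eq_or_ne x 0 with rfl | hx
  · simp
  have hx_pos : 0 < ‖x‖ := norm_pos_iff.2 hx
  have hunit : ‖x‖⁻¹ • x ∈ S ∩ Metric.sphere 0 1 :=
    ⟨hS_smul x hxS _ (inv_pos.2 hx_pos), by simp [norm_smul, hx_pos.ne']⟩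
  have := hcK _ hunit
  rw [Function.comp_apply, map_smul, norm_smul, norm_inv, norm_norm, le_inv_mul_iff₀ hx_pos] at this
  linarith

theorem exists_isMinOn_norm_sub_of_coercive {K : Set E} (hK : IsClosed K) (hne : K.Nonempty)
    (L : E →L[ℝ] F) {c : ℝ} (hc : 0 < c) (hcoer : ∀ x ∈ K, c * ‖x‖ ≤ ‖L x‖) (b : F) :
    ∃ x ∈ K, IsMinOn (fun x => ‖L x - b‖) K x := by
  obtain ⟨x₀, hx₀⟩ := hne
  refine (L.continuous.sub continuous_const).norm.continuousOn.exists_isMinOn' hK hx₀ ?_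
  have hlarge : ∀ᶠ x in cocompact E, (‖L x₀ - b‖ + ‖b‖) / c ≤ ‖x‖ :=
    tendsto_norm_cocompact_atTop.eventually_ge_atTop _
  filter_upwards [inf_le_left (b := 𝓟 K) hlarge, inf_le_right (a := cocompact E) (mem_principal_self K)]
    with x hx hxK
  rw [div_le_iff₀ hc] at hx
  calc ‖L x₀ - b‖ ≤ c * ‖x‖ - ‖b‖ := by linarith
    _ ≤ ‖L x‖ - ‖b‖ := by linarith [hcoer x hxK]
    _ ≤ ‖L x - b‖ := norm_sub_norm_le _ _

end Coercive

section Sparse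

variable {N : ℕ}

theorem eventually_supp_subset_s19 (x : Fin N → ℝ) : ∀ᶠ y in 𝓝 x, supp x ⊆ supp y := by
  have hne : ∀ i ∈ supp x, ∀ᶠ y in 𝓝 x, y i ≠ 0 := fun i hi =>
    (continuous_apply i).continuousAt.eventually_ne (Finset.mem_filter.1 hi).2
  filter_upwards [(Finset.eventually_all _).2 hne] with y hy i hi
  exact Finset.mem_filter.2 ⟨Finset.mem_univ i, hy i hi⟩

theorem lowerSemicontinuous_nrm0 : LowerSemicontinuous (nrm0 (N := N)) := fun x _ hk => by
  filter_upwards [eventually_supp_subset_s19 x] with y hy using hk.trans_le (Finset.card_le_card hy)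

theorem isClosed_setOf_nrm0_le (s : ℕ) : IsClosed {x : Fin N → ℝ | nrm0 x ≤ s} :=
  lowerSemicontinuous_nrm0.isClosed_preimage s

theorem nrm0_smul {c : ℝ} (hc : c ≠ 0) (x : Fin N → ℝ) : nrm0 (c • x) = nrm0 x := by
  simp [nrm0, hc]

end Sparse

/-- If `A` is s-regular then `min (1/2)‖Ax - b‖²  s.t. ‖x‖₀ ≤ s, x ≥ 0`
attains a global minimizer. -/
theorem stmt19 {M N s : ℕ} (A : Matrix (Fin M) (Fin N) ℝ)
    (hreg : ∀ d : Fin N → ℝ, d ≠ 0 → nrm0 d ≤ s → 0 < ∑ j, (A.mulVec d j) ^ 2)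
    (b : Fin M → ℝ) :
    ∃ xs : Fin N → ℝ, nrm0 xs ≤ s ∧ (∀ i, 0 ≤ xs i) ∧
      ∀ x : Fin N → ℝ, nrm0 x ≤ s → (∀ i, 0 ≤ x i) →
        (1 / 2) * ∑ j, (A.mulVec xs j - b j) ^ 2
          ≤ (1 / 2) * ∑ j, (A.mulVec x j - b j) ^ 2 := by
  set e := (EuclideanSpace.equiv (Fin M) ℝ).symm
  set L : (Fin N → ℝ) →L[ℝ] EuclideanSpace ℝ (Fin M) :=
    e.toContinuousLinearMap ∘L LinearMap.toContinuousLinearMap A.mulVecLin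
  have hres : ∀ x, ∑ j, (A.mulVec x j - b j) ^ 2 = ‖L x - e b‖ ^ 2 := fun x => by
    simp [L, e, EuclideanSpace.norm_sq_eq]
  have hL : ∀ x ∈ {x : Fin N → ℝ | nrm0 x ≤ s}, x ≠ 0 → L x ≠ 0 := fun x hxs hx hLx => by
    have hAx : A.mulVec x = 0 := by simpa [L, e] using hLx
    simpa [hAx] using hreg x hx hxs
  obtain ⟨c, hc, hcoer⟩ := exists_pos_mul_norm_le_norm_apply_on_cone (isClosed_setOf_nrm0_le s)
    (fun x hx t ht => by simpa [nrm0_smul ht.ne'] using hx) L hL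
  obtain ⟨xs, ⟨hxs_sparse, hxs_nonneg⟩, hmin⟩ := exists_isMinOn_norm_sub_of_coercive
    ((isClosed_setOf_nrm0_le s).inter isClosed_Ici) ⟨0, by simp [nrm0], Set.self_mem_Ici⟩ L hc
    (fun x hx => hcoer x hx.1) (e b)
  refine ⟨xs, hxs_sparse, hxs_nonneg, fun x hx_sparse hx_nonneg => ?_⟩
  rw [hres, hres]
  gcongr
  exact hmin ⟨hx_sparse, hx_nonneg⟩
end
end
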